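/- arXiv:math/9909031 — 2 statements merged into one kernel-verified Lean document; each statement's English description precedes it below -/
import Mathlib

section
/- For every 2-SAT formula F, the spine S(F) = {x : there exists a satisfiable subformula H of F such that H∧x is unsatisfiable} equals the set of literals x such that the implication digraph D_F contains a directed path from x to x̄. -/
/-- A literal over `n` Boolean variables: a variable index together with a sign
(`true` = the variable itself, `false` = its negation). -/
abbrev Lit (n : ℕ) := Fin n × Bool

/-- Negation of a literal. -/
def negLit {n : ℕ} (x : Lit n) : Lit n := (x.1, !x.2)

/-- Value of a literal under a truth assignment. -/
def evalLit {n : ℕ} (σ : Fin n → Bool) (x : Lit n) : Bool := σ x.1 == x.2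

/-- A 2-SAT formula is a finite set of clauses `(u, v)`, read as `u ∨ v`
(with `(u,v)` and `(v,u)` treated symmetrically throughout). -/
abbrev Formula (n : ℕ) := Finset (Lit n × Lit n)

/-- Satisfiability of a 2-SAT formula. -/
def Sat {n : ℕ} (F : Formula n) : Prop :=
  ∃ σ : Fin n → Bool, ∀ c ∈ F, evalLit σ c.1 = true ∨ evalLit σ c.2 = true

/-- The edge relation of the implication digraph `D_F`: there is an edge `x → y`
iff `F` contains the clause `x̄ ∨ y` (in either order). -/
def edgeOf {n : ℕ} (F : Formula n) (x y : Lit n) : Prop :=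
  (negLit x, y) ∈ F ∨ (y, negLit x) ∈ F

/-- `reach F x y` : there is a directed path from `x` to `y` in `D_F`
(`x ⇝ x` by convention). -/
def reach {n : ℕ} (F : Formula n) : Lit n → Lit n → Prop :=
  Relation.ReflTransGen (edgeOf F)

/-- Satisfiability of `H ∧ x`, i.e. of `H` together with the unit clause `x`. -/
def SatWith {n : ℕ} (H : Formula n) (x : Lit n) : Prop :=
  ∃ σ : Fin n → Bool, evalLit σ x = true ∧
    ∀ c ∈ H, evalLit σ c.1 = true ∨ evalLit σ c.2 = true

/-- The spine of a formula. -/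
def spine {n : ℕ} (F : Formula n) : Set (Lit n) :=
  {x | ∃ H : Formula n, H ⊆ F ∧ Sat H ∧ ¬ SatWith H x}

/-- A set of literals is strictly distinct if it contains no literal together
with its negation. -/
def SDset {n : ℕ} (M : Set (Lit n)) : Prop := ∀ y ∈ M, negLit y ∉ M

-- auxiliary lemmas

lemma negLit_negLit {n : ℕ} (x : Lit n) : negLit (negLit x) = x := by
  simp [negLit]

lemma negLit_ne {n : ℕ} (x : Lit n) : negLit x ≠ x := by
  simp [negLit, Prod.ext_iff]

lemma evalLit_negLit {n : ℕ} (σ : Fin n → Bool) (x : Lit n) :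
    evalLit σ (negLit x) = !evalLit σ x := by
  simp only [evalLit, negLit]
  cases σ x.1 <;> cases x.2 <;> rfl

lemma edgeOf_flip {n : ℕ} {F : Formula n} {x y : Lit n} (h : edgeOf F x y) :
    edgeOf F (negLit y) (negLit x) := by
  unfold edgeOf at h ⊢
  rw [negLit_negLit]
  exact h.symm

lemma reach_flip {n : ℕ} {F : Formula n} {x y : Lit n} (h : reach F x y) :
    reach F (negLit y) (negLit x) := by
  induction h with
  | refl => exact Relation.ReflTransGen.refl
  | tail _ e ih => exact Relation.ReflTransGen.head (edgeOf_flip e) ih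

def IsWalk {n : ℕ} (F : Formula n) (f : ℕ → Lit n) (k : ℕ) : Prop :=
  ∀ m < k, edgeOf F (f m) (f (m+1))

lemma walk_reach {n : ℕ} {F : Formula n} :
    ∀ (k : ℕ) (f : ℕ → Lit n), IsWalk F f k → reach F (f 0) (f k) := by
  intro k
  induction k with
  | zero => intro f _; exact Relation.ReflTransGen.refl
  | succ k ih =>
    intro f hw
    have h1 := ih (fun m => f (m+1)) (fun m hm => hw (m+1) (by omega))
    exact Relation.ReflTransGen.head (hw 0 (by omega)) h1

lemma reach_walk {n : ℕ} {F : Formula n} {x y : Lit n} (h : reach F x y) :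
    ∃ (k : ℕ) (f : ℕ → Lit n), IsWalk F f k ∧ f 0 = x ∧ f k = y := by
  induction h with
  | refl => exact ⟨0, fun _ => x, fun m hm => absurd hm (by omega), rfl, rfl⟩
  | @tail b c _ e ih =>
    obtain ⟨k, f, hw, h0, hk⟩ := ih
    refine ⟨k+1, fun m => if m ≤ k then f m else c, ?_, ?_, ?_⟩
    · intro m hm
      by_cases h1 : m < k
      · simp only [if_pos (by omega : m ≤ k), if_pos (by omega : m + 1 ≤ k)]
        exact hw m h1
      · have hmk : m = k := by omega
        subst hmk
        simp only [if_pos (le_refl m), if_neg (by omega : ¬ m + 1 ≤ m)]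
        rw [hk]; exact e
    · simp only [if_pos (by omega : 0 ≤ k)]; exact h0
    · simp only [if_neg (by omega : ¬ k + 1 ≤ k)]

lemma walk_segment {n : ℕ} {F : Formula n} {f : ℕ → Lit n} {k : ℕ}
    (hw : IsWalk F f k) (a b : ℕ) (hab : a ≤ b) (hb : b ≤ k) :
    ∃ g : ℕ → Lit n, IsWalk F g (b - a) ∧ g 0 = f a ∧ g (b - a) = f b := by
  refine ⟨fun m => f (a + m), fun m hm => hw (a + m) (by omega), by simp, ?_⟩
  have : a + (b - a) = b := by omega
  simp [this]

lemma walk_revcomp {n : ℕ} {F : Formula n} {f : ℕ → Lit n} {k : ℕ}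
    (hw : IsWalk F f k) :
    ∃ g : ℕ → Lit n, IsWalk F g k ∧ g 0 = negLit (f k) ∧ g k = negLit (f 0) := by
  refine ⟨fun m => negLit (f (k - m)), ?_, by simp, by simp⟩
  intro m hm
  have h1 : k - m = (k - (m+1)) + 1 := by omega
  have h2 := edgeOf_flip (hw (k - (m+1)) (by omega))
  show edgeOf F (negLit (f (k - m))) (negLit (f (k - (m+1))))
  rw [h1]
  exact h2

lemma walk_trans {n : ℕ} {F : Formula n} {f g : ℕ → Lit n} {a b : ℕ}
    (hf : IsWalk F f a) (hg : IsWalk F g b) (hfg : f a = g 0) :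
    ∃ h : ℕ → Lit n, IsWalk F h (a + b) ∧ h 0 = f 0 ∧ h (a + b) = g b := by
  refine ⟨fun m => if m < a then f m else g (m - a), ?_, ?_, ?_⟩
  · intro m hm
    by_cases h1 : m < a
    · by_cases h2 : m + 1 < a
      · simp only [if_pos h1, if_pos h2]; exact hf m h1
      · have h3 : m + 1 - a = 0 := by omega
        simp only [if_pos h1, if_neg h2, h3, ← hfg]
        have h4 : a = m + 1 := by omega
        rw [h4]
        exact hf m h1
    · have h3 : m + 1 - a = (m - a) + 1 := by omega
      simp only [if_neg h1, if_neg (by omega : ¬ m + 1 < a), h3]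
      exact hg (m - a) (by omega)
  · by_cases h1 : 0 < a
    · simp [h1]
    · have ha : a = 0 := by omega
      subst ha
      simp [← hfg]
  · simp only [if_neg (by omega : ¬ a + b < a)]
    congr 1
    omega

lemma satWith_of_not_reach {n : ℕ} {F H : Formula n} {x : Lit n}
    (hreach : ¬ reach F x (negLit x)) (hHF : H ⊆ F) (hSat : Sat H) :
    SatWith H x := by
  classical
  obtain ⟨σ, hσ⟩ := hSat
  set σ' : Fin n → Bool := fun v =>
    if reach F x (v, true) then true
    else if reach F x (v, false) then false else σ v with hσ'def
  have hA : ∀ y : Lit n, reach F x y → evalLit σ' y = true := by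
    rintro ⟨v, b⟩ hy
    cases b
    · have hnt : ¬ reach F x (v, true) := by
        intro ht
        have h2 : reach F (v, false) (negLit x) := by
          have := reach_flip ht
          simpa [negLit] using this
        exact hreach (hy.trans h2)
      show (σ' v == false) = true
      rw [hσ'def]
      simp [hnt, hy]
    · show (σ' v == true) = true
      rw [hσ'def]
      simp [hy]
  have hagree : ∀ y : Lit n, ¬ reach F x y → ¬ reach F x (negLit y) →
      evalLit σ' y = evalLit σ y := by
    rintro ⟨v, b⟩ h1 h2
    have hv : σ' v = σ v := by
      rw [hσ'def]
      cases b
      · simp only [negLit] at h1 h2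
        simp at h2
        simp [h1, h2]
      · simp only [negLit] at h1 h2
        simp at h2
        simp [h1, h2]
    simp [evalLit, hv]
  refine ⟨σ', hA x Relation.ReflTransGen.refl, ?_⟩
  intro c hc
  by_cases r1 : reach F x c.1
  · exact Or.inl (hA _ r1)
  by_cases r2 : reach F x c.2
  · exact Or.inr (hA _ r2)
  have hcF : c ∈ F := hHF hc
  have e1 : edgeOf F (negLit c.1) c.2 := by
    unfold edgeOf
    rw [negLit_negLit]
    exact Or.inl (by simpa using hcF)
  have e2 : edgeOf F (negLit c.2) c.1 := by
    unfold edgeOf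
    rw [negLit_negLit]
    exact Or.inr (by simpa using hcF)
  have n1 : ¬ reach F x (negLit c.1) := fun h => r2 (h.tail e1)
  have n2 : ¬ reach F x (negLit c.2) := fun h => r1 (h.tail e2)
  rw [hagree c.1 r1 n1, hagree c.2 r2 n2]
  exact hσ c hc

lemma reach_mem_spine {n : ℕ} {F : Formula n} {x : Lit n}
    (h : reach F x (negLit x)) : x ∈ spine F := by
  classical
  have hP : ∃ k : ℕ, ∃ f : ℕ → Lit n, IsWalk F f k ∧ f 0 = x ∧ f k = negLit x :=
    reach_walk h
  set k := Nat.find hP with hkdef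
  obtain ⟨f, hw, h0, hk⟩ := Nat.find_spec hP
  rw [← hkdef] at hw hk
  -- minimality: any walk from x to negLit x has length ≥ k
  have hbound : ∀ (L : ℕ) (g : ℕ → Lit n),
      IsWalk F g L → g 0 = x → g L = negLit x → k ≤ L := by
    intro L g hg hg0 hgL
    by_contra hlt
    exact Nat.find_min hP (by omega) ⟨g, hg, hg0, hgL⟩
  -- k ≥ 1
  have hk1 : 1 ≤ k := by
    rcases Nat.eq_zero_or_pos k with h0' | h1
    · exfalso
      rw [h0', h0] at hk
      exact negLit_ne x hk.symm
    · exact h1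
  -- no duplicates
  have nodup : ∀ i j, i < j → j ≤ k → f i ≠ f j := by
    intro i j hij hjk heq
    obtain ⟨g1, hg1, hg10, hg1e⟩ := walk_segment hw 0 i (by omega) (by omega)
    obtain ⟨g2, hg2, hg20, hg2e⟩ := walk_segment hw j k hjk le_rfl
    obtain ⟨g, hg, hgz, hge⟩ := walk_trans hg1 hg2 (by rw [hg1e, hg20, heq])
    have := hbound _ _ hg (by rw [hgz, hg10, h0]) (by rw [hge, hg2e, hk])
    omega
  -- bad pairs are symmetric
  have badpair : ∀ i j, i < j → j ≤ k → f j = negLit (f i) → i + j = k := by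
    intro i j hij hjk heq
    obtain ⟨g1, hg1, hg10, hg1e⟩ := walk_segment hw 0 i (by omega) (by omega)
    obtain ⟨g2, hg2, hg20, hg2e⟩ := walk_segment hw i j (by omega) hjk
    obtain ⟨g3, hg3, hg30, hg3e⟩ := walk_segment hw j k hjk le_rfl
    obtain ⟨r1, hr1, hr10, hr1e⟩ := walk_revcomp hg1
    obtain ⟨r3, hr3, hr30, hr3e⟩ := walk_revcomp hg3
    -- combo 1 : g1 ++ g2 ++ r1, length i + ((j-i) + i)
    obtain ⟨c2, hc2, hc20, hc2e⟩ := walk_trans hg2 hr1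
      (by rw [hg2e, hr10, hg1e]; exact heq)
    obtain ⟨c1, hc1, hc10, hc1e⟩ := walk_trans hg1 hc2 (by rw [hg1e, hc20, hg20])
    have hb1 := hbound _ _ hc1 (by rw [hc10, hg10, h0])
      (by rw [hc1e, hc2e, hr1e, hg10, h0])
    -- combo 2 : r3 ++ g2 ++ g3, length (k-j) + ((j-i) + (k-j))
    obtain ⟨d2, hd2, hd20, hd2e⟩ := walk_trans hg2 hg3 (by rw [hg2e, hg30])
    obtain ⟨d1, hd1, hd10, hd1e⟩ := walk_trans hr3 hd2 (by
      rw [hr3e, hd20, hg20, hg30, heq, negLit_negLit])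
    have hb2 := hbound _ _ hd1 (by rw [hd10, hr30, hg3e, hk, negLit_negLit])
      (by rw [hd1e, hd2e, hg3e, hk])
    omega
  -- symmetric wrappers
  have nodup' : ∀ i j, i ≤ k → j ≤ k → i ≠ j → f i ≠ f j := by
    intro i j hi hj hne
    rcases lt_or_gt_of_ne hne with h' | h'
    · exact nodup i j h' hj
    · exact fun he => nodup j i h' hi he.symm
  have badpair' : ∀ i j, i ≤ k → j ≤ k → i ≠ j → f j = negLit (f i) → i + j = k := by
    intro i j hi hj hne heq
    rcases lt_or_gt_of_ne hne with h' | h'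
    · exact badpair i j h' hj heq
    · have : f i = negLit (f j) := by rw [heq, negLit_negLit]
      have := badpair j i h' hi this
      omega
  -- threshold and the assignment
  set t : ℕ := (k + 1) / 2 with htdef
  set litT : ℕ → Lit n := fun m => if m < t then negLit (f m) else f m with hlitT
  set Good : ℕ → Prop := fun m => m ≤ k ∧ m ≠ t with hGood
  have litT_lt : ∀ m, m < t → litT m = negLit (f m) := fun m hm => if_pos hm
  have litT_ge : ∀ m, ¬ m < t → litT m = f m := fun m hm => if_neg hm
  have sd : ∀ m m', Good m → Good m' → litT m' ≠ negLit (litT m) := by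
    rintro m m' ⟨hm, hmt⟩ ⟨hm', hmt'⟩ heq
    have hmm' : m ≠ m' := by
      intro hEq
      subst hEq
      exact negLit_ne (litT m) heq.symm
    by_cases cm : m < t <;> by_cases cm' : m' < t
    · rw [litT_lt m cm, litT_lt m' cm', negLit_negLit] at heq
      have h1 : f m = negLit (f m') := heq.symm
      have := badpair' m' m hm' hm hmm'.symm h1
      omega
    · rw [litT_lt m cm, litT_ge m' cm', negLit_negLit] at heq
      exact nodup' m m' hm hm' hmm' heq.symm
    · rw [litT_ge m cm, litT_lt m' cm'] at heq
      have h1 : f m' = f m := by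
        have h2 := congrArg negLit heq
        rwa [negLit_negLit, negLit_negLit] at h2
      exact nodup' m' m hm' hm hmm'.symm h1
    · rw [litT_ge m cm, litT_ge m' cm'] at heq
      have := badpair' m m' hm hm' hmm' heq
      omega
  set σ : Fin n → Bool := fun v =>
    decide (∃ m, Good m ∧ litT m = (v, true)) with hσdef
  have litT_true : ∀ m, Good m → evalLit σ (litT m) = true := by
    intro m hGm
    rcases hb : (litT m).2 with _ | _
    · -- second component false : show σ (litT m).1 = false
      have hσv : σ (litT m).1 = false := by
        rw [hσdef]
        simp only [decide_eq_false_iff_not]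
        rintro ⟨m', hGm', hm'⟩
        refine sd m m' hGm hGm' ?_
        rw [hm']
        have h2 : negLit (litT m) = ((litT m).1, !(litT m).2) := rfl
        rw [h2, hb]
        rfl
      show (σ (litT m).1 == (litT m).2) = true
      rw [hσv, hb]
      rfl
    · have hσv : σ (litT m).1 = true := by
        rw [hσdef]
        simp only [decide_eq_true_eq]
        exact ⟨m, hGm, by rw [← hb]⟩
      show (σ (litT m).1 == (litT m).2) = true
      rw [hσv, hb]
      rfl
  -- the subformula
  set H : Formula n := F.filter (fun c => ∃ m, m < k ∧
    (c = (negLit (f m), f (m+1)) ∨ c = (f (m+1), negLit (f m)))) with hHdef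
  have hHF : H ⊆ F := Finset.filter_subset _ _
  refine ⟨H, hHF, ?_, ?_⟩
  · -- Sat H
    refine ⟨σ, ?_⟩
    intro c hc
    rw [hHdef, Finset.mem_filter] at hc
    obtain ⟨-, m, hm, hcase⟩ := hc
    by_cases hmt : m < t
    · have hGm : Good m := ⟨by omega, by omega⟩
      have h1 : evalLit σ (negLit (f m)) = true := by
        have h2 := litT_true m hGm
        rwa [litT_lt m hmt] at h2
      rcases hcase with hcc | hcc <;> rw [hcc]
      · exact Or.inl h1
      · exact Or.inr h1
    · have hGm : Good (m+1) := ⟨by omega, by omega⟩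
      have h1 : evalLit σ (f (m+1)) = true := by
        have h2 := litT_true (m+1) hGm
        rwa [litT_ge (m+1) (by omega)] at h2
      rcases hcase with hcc | hcc <;> rw [hcc]
      · exact Or.inr h1
      · exact Or.inl h1
  · -- ¬ SatWith H x
    rintro ⟨σ', hx', hsat⟩
    have prop : ∀ m, m ≤ k → evalLit σ' (f m) = true := by
      intro m
      induction m with
      | zero => intro _; rw [h0]; exact hx'
      | succ m ih =>
        intro hmk
        have hm1 := ih (by omega)
        have hmk' : m < k := by omega
        rcases hw m hmk' with hcl | hcl
        · have hcH : (negLit (f m), f (m+1)) ∈ H := by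
            rw [hHdef, Finset.mem_filter]
            exact ⟨hcl, m, hmk', Or.inl rfl⟩
          rcases hsat _ hcH with h' | h'
          · rw [evalLit_negLit, hm1] at h'
            exact absurd h' (by simp)
          · exact h'
        · have hcH : (f (m+1), negLit (f m)) ∈ H := by
            rw [hHdef, Finset.mem_filter]
            exact ⟨hcl, m, hmk', Or.inr rfl⟩
          rcases hsat _ hcH with h' | h'
          · exact h'
          · rw [evalLit_negLit, hm1] at h'
            exact absurd h' (by simp)
    have hfinal := prop k le_rfl
    rw [hk, evalLit_negLit, hx'] at hfinal
    exact absurd hfinal (by simp)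

/-- The spine of a 2-SAT formula equals the set of literals `x`
with a directed path from `x` to `x̄` in the implication digraph. -/
theorem spine_eq_halfCycles {n : ℕ} (F : Formula n)
    (hF : ∀ c ∈ F, c.1.1 ≠ c.2.1) :
    spine F = {x : Lit n | reach F x (negLit x)} := by
  ext x
  constructor
  · intro hx
    obtain ⟨H, hHF, hSat, hnot⟩ := hx
    by_contra hr
    exact hnot (satWith_of_not_reach hr hHF hSat)
  · intro hx
    exact reach_mem_spine hx
end

section
/- For a fixed 2-SAT formula F, a fixed literal x, and a fixed strictly distinct set X of k literals with x ∈ X, under the random model F_{n,p}: Pr(L⁺_{F_{n,p}}(x) = X) = Pr(G_{k,p} is connected)·(1−p)^{2kn − 3k²/2 − k/2}. -/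
/-- The probability of an event `A` when each coordinate `e : E` is an
independent Bernoulli(`p`) bit. -/
noncomputable def bernoulliPr {E : Type*} [Fintype E] [DecidableEq E]
    (p : ℝ) (A : Set (E → Bool)) : ℝ :=
  ∑ ω : E → Bool,
    Set.indicator A (fun ω' => ∏ e : E, if ω' e = true then p else 1 - p) ω

/-- Edge relation of the implication digraph of the random 2-SAT formula
encoded by `ω` : there is an edge `x → y` iff the clause `x̄ ∨ y` (an unordered
pair of strictly distinct literals) is present. -/
def fEdge {n : ℕ} (ω : Sym2 (Lit n) → Bool) (x y : Lit n) : Prop :=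
  x.1 ≠ y.1 ∧ ω s(negLit x, y) = true

/-- Directed reachability in the implication digraph (`x ⇝ x` by convention). -/
def freach {n : ℕ} (ω : Sym2 (Lit n) → Bool) : Lit n → Lit n → Prop :=
  Relation.ReflTransGen (fEdge ω)

/-- The out-set `L⁺(x)` of a literal `x`. -/
def outSet {n : ℕ} (ω : Sym2 (Lit n) → Bool) (x : Lit n) : Set (Lit n) :=
  {y | freach ω x y}

/-- `P_{n,p}(k)` : the probability that in the random 2-SAT formula `F_{n,p}`
the out-set of the literal `x` consists of exactly `k` strictly distinct
literals. -/
noncomputable def Pnp (n : ℕ) (p : ℝ) (k : ℕ) (x : Lit n) : ℝ :=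
  bernoulliPr p
    {ω : Sym2 (Lit n) → Bool | SDset (outSet ω x) ∧ (outSet ω x).ncard = k}

/-- The random graph `G_{n,q}` encoded by a configuration of edge-bits. -/
def graphOf {n : ℕ} (η : Sym2 (Fin n) → Bool) : SimpleGraph (Fin n) :=
  SimpleGraph.fromRel fun a b => η s(a, b) = true

/-- The probability that `G_{k,p}` is connected. -/
noncomputable def connPr (k : ℕ) (p : ℝ) : ℝ :=
  bernoulliPr p {η : Sym2 (Fin k) → Bool | (graphOf η).Connected}

/-- `Q_{n,p}(k)` : the probability that the connected component of the vertex
`v` in `G_{n,2p-p²}` has exactly `k` vertices. -/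
noncomputable def Qnp (n : ℕ) (p : ℝ) (k : ℕ) (v : Fin n) : ℝ :=
  bernoulliPr (2 * p - p ^ 2)
    {η : Sym2 (Fin n) → Bool | {y | (graphOf η).Reachable v y}.ncard = k}

open Finset

section Toolkit
variable {E E' : Type*} [Fintype E] [DecidableEq E] [Fintype E'] [DecidableEq E'] {p : ℝ}

/-- weight -/
noncomputable def bw (p : ℝ) (ω : E → Bool) : ℝ := ∏ e : E, if ω e = true then p else 1 - p

lemma bernoulliPr_eq (A : Set (E → Bool)) [DecidablePred (· ∈ A)] :
    bernoulliPr p A = ∑ ω : E → Bool, if ω ∈ A then bw p ω else 0 := by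
  unfold bernoulliPr bw
  refine Finset.sum_congr rfl fun ω _ => ?_
  rw [Set.indicator_apply]

lemma sum_bw : ∑ ω : E → Bool, bw p ω = 1 := by
  classical
  have h : ∑ ω : E → Bool, bw p ω
      = ∑ t ∈ (univ : Finset E).powerset, (∏ e ∈ t, p) * ∏ e ∈ univ \ t, (1 - p) := by
    refine Finset.sum_nbij' (fun ω => univ.filter (fun e => ω e = true))
      (fun t => fun e => if e ∈ t then true else false) ?_ ?_ ?_ ?_ ?_
    · intro ω _; simp
    · intro t _; simp
    · intro ω _
      funext e; by_cases h : ω e = true <;> simp [h]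
    · intro t ht
      ext e; simp
    · intro ω _
      unfold bw
      rw [← Finset.prod_filter_mul_prod_filter_not univ (fun e => ω e = true)]
      congr 1
      · exact Finset.prod_congr rfl (fun e he => by simp at he; simp [he])
      · rw [Finset.sdiff_eq_filter]
        exact Finset.prod_congr (by simp) (fun e he => by simp at he; simp [he])
  rw [h, ← Finset.prod_add]
  simp
end Toolkit

section Tool2
variable {E E' : Type*} [Fintype E] [DecidableEq E] [Fintype E'] [DecidableEq E'] {p : ℝ}

lemma bernoulli_reindex (σ : E ≃ E') (A : Set (E → Bool)) :
    bernoulliPr p {η : E' → Bool | (fun e => η (σ e)) ∈ A} = bernoulliPr p A := by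
  classical
  rw [bernoulliPr_eq, bernoulliPr_eq]
  refine Fintype.sum_equiv (σ.arrowCongr (Equiv.refl Bool)).symm _ _ fun η => ?_
  have hw : bw p (fun e => η (σ e)) = bw p η := by
    unfold bw
    exact Equiv.prod_comp σ (fun e' => if η e' = true then p else 1 - p)
  have hmem : ((σ.arrowCongr (Equiv.refl Bool)).symm η) = fun e => η (σ e) := rfl
  rw [hmem, hw]
  rfl

lemma bernoulli_split (P : E → Prop) [DecidablePred P]
    (A : Set (E → Bool)) (F : Set ({e // P e} → Bool)) (G : Set ({e // ¬ P e} → Bool))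
    (h : ∀ ω : E → Bool, ω ∈ A ↔ ((fun e => ω e.1) ∈ F ∧ (fun e => ω e.1) ∈ G)) :
    bernoulliPr p A = bernoulliPr p F * bernoulliPr p G := by
  classical
  rw [bernoulliPr_eq, bernoulliPr_eq, bernoulliPr_eq]
  rw [← Equiv.sum_comp (Equiv.piEquivPiSubtypeProd P (fun _ => Bool)).symm
    (fun ω => if ω ∈ A then bw p ω else 0)]
  rw [Fintype.sum_prod_type, Finset.sum_mul_sum]
  refine Finset.sum_congr rfl fun g _ => Finset.sum_congr rfl fun gc _ => ?_
  have hres1 : (fun e : {e // P e} =>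
      ((Equiv.piEquivPiSubtypeProd P (fun _ => Bool)).symm (g, gc)) e.1) = g := by
    funext e; simp [Equiv.piEquivPiSubtypeProd, e.2]
  have hres2 : (fun e : {e // ¬ P e} =>
      ((Equiv.piEquivPiSubtypeProd P (fun _ => Bool)).symm (g, gc)) e.1) = gc := by
    funext e; simp [Equiv.piEquivPiSubtypeProd, e.2]
  have hbw : bw p ((Equiv.piEquivPiSubtypeProd P (fun _ => Bool)).symm (g, gc))
      = bw p g * bw p gc := by
    unfold bw
    rw [← Fintype.prod_subtype_mul_prod_subtype P
      (fun e => if ((Equiv.piEquivPiSubtypeProd P (fun _ => Bool)).symm (g, gc)) e = true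
        then p else 1 - p)]
    congr 1
    · exact Finset.prod_congr rfl fun e _ => by simp [Equiv.piEquivPiSubtypeProd, e.2]
    · exact Finset.prod_congr rfl fun e _ => by simp [Equiv.piEquivPiSubtypeProd, e.2]
  rw [h, hres1, hres2, hbw]
  by_cases h1 : g ∈ F <;> by_cases h2 : gc ∈ G <;> simp [h1, h2]

lemma bernoulli_univ : bernoulliPr p (Set.univ : Set (E → Bool)) = 1 := by
  classical
  rw [bernoulliPr_eq]
  simp [sum_bw]

lemma bernoulli_allFalse :
    bernoulliPr p {ω : E → Bool | ∀ e, ω e = false} = (1 - p) ^ (Fintype.card E) := by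
  classical
  rw [bernoulliPr_eq]
  rw [Finset.sum_eq_single (fun _ => false)]
  · simp [bw, Finset.prod_const]
  · intro ω _ hne
    have : ¬ ∀ e, ω e = false := by
      intro hc; exact hne (funext hc)
    simp [this]
  · simp

lemma bernoulli_marginal (P : E → Prop) [DecidablePred P]
    (A : Set (E → Bool)) (F : Set ({e // P e} → Bool))
    (h : ∀ ω : E → Bool, ω ∈ A ↔ (fun e => ω e.1) ∈ F) :
    bernoulliPr p A = bernoulliPr p F := by
  classical
  rw [bernoulli_split P A F Set.univ (fun ω => by simpa using h ω), bernoulli_univ, mul_one]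

def subsubEquiv (P Q : E → Prop) (hdisj : ∀ e, P e → Q e → False) :
    {e' : {e // ¬ Q e} // P e'.1} ≃ {e // P e} where
  toFun e := ⟨e.1.1, e.2⟩
  invFun e := ⟨⟨e.1, fun hq => hdisj e.1 e.2 hq⟩, e.2⟩
  left_inv e := rfl
  right_inv e := rfl

lemma bernoulli_factor (P Q : E → Prop) [DecidablePred P] [DecidablePred Q]
    (hdisj : ∀ e, P e → Q e → False)
    (A : Set (E → Bool)) (F : Set ({e // P e} → Bool))
    (h : ∀ ω : E → Bool, ω ∈ A ↔
      ((fun e : {e // P e} => ω e.1) ∈ F ∧ ∀ e, Q e → ω e = false)) :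
    bernoulliPr p A = bernoulliPr p F * (1 - p) ^ (Fintype.card {e // Q e}) := by
  classical
  set σ := subsubEquiv P Q hdisj with hσ
  set F' : Set ({e' : {e // ¬ Q e} // P e'.1} → Bool) :=
    {g' | (fun e => g' (σ.symm e)) ∈ F} with hF'
  have key : bernoulliPr p A =
      bernoulliPr p {g : {e // ¬ Q e} → Bool |
        (fun e' : {e' : {e // ¬ Q e} // P e'.1} => g e'.1) ∈ F'}
      * bernoulliPr p {g : {e // Q e} → Bool | ∀ e, g e = false} := by
    rw [mul_comm]
    refine bernoulli_split Q A _ _ fun ω => ?_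
    rw [h]
    have h1 : ((fun e' : {e' : {e // ¬ Q e} // P e'.1} => ω e'.1.1) ∈ F')
        ↔ ((fun e : {e // P e} => ω e.1) ∈ F) := Iff.rfl
    constructor
    · rintro ⟨hf, h2⟩
      exact ⟨fun e => h2 e.1 e.2, h1.mpr hf⟩
    · rintro ⟨h2, hf⟩
      exact ⟨h1.mp hf, fun e hq => h2 ⟨e, hq⟩⟩
  rw [key, bernoulli_allFalse]
  congr 1
  have h2 : bernoulliPr p {g : {e // ¬ Q e} → Bool |
      (fun e' : {e' : {e // ¬ Q e} // P e'.1} => g e'.1) ∈ F'} = bernoulliPr p F' :=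
    bernoulli_marginal (fun e' : {e // ¬ Q e} => P e'.1) _ F' (fun g => Iff.rfl)
  rw [h2]
  exact bernoulli_reindex σ.symm F

lemma bernoulli_partition {ι : Type*} [DecidableEq ι] (s : Finset ι) (A : ι → Set (E → Bool))
    (h : ∀ ω : E → Bool, ∃! i, i ∈ s ∧ ω ∈ A i) :
    ∑ i ∈ s, bernoulliPr p (A i) = 1 := by
  classical
  have : ∀ i, bernoulliPr p (A i) = ∑ ω : E → Bool, if ω ∈ A i then bw p ω else 0 :=
    fun i => bernoulliPr_eq _
  simp_rw [this]
  rw [Finset.sum_comm]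
  rw [← sum_bw (p := p) (E := E)]
  refine Finset.sum_congr rfl fun ω _ => ?_
  obtain ⟨i, ⟨his, hiA⟩, huniq⟩ := h ω
  rw [Finset.sum_eq_single i]
  · simp [hiA]
  · intro j hjs hne
    by_cases hj : ω ∈ A j
    · exact absurd (huniq j ⟨hjs, hj⟩) hne
    · simp [hj]
  · intro hi; exact absurd his hi

end Tool2

section Reach
open Relation

lemma rtg_iff_of_iff {α : Type*} {R S : α → α → Prop} (h : ∀ a b, R a b ↔ S a b) {a b : α} :
    ReflTransGen R a b ↔ ReflTransGen S a b :=
  ⟨fun hr => Relation.ReflTransGen.mono (fun x y hxy => (h x y).mp hxy) _ _ hr,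
   fun hr => Relation.ReflTransGen.mono (fun x y hxy => (h x y).mpr hxy) _ _ hr⟩

lemma rtg_equiv {α β : Type*} (σ : α ≃ β) {R : α → α → Prop} {S : β → β → Prop}
    (h : ∀ a b, R a b ↔ S (σ a) (σ b)) {a b : α} :
    ReflTransGen R a b ↔ ReflTransGen S (σ a) (σ b) := by
  constructor
  · exact fun hr => ReflTransGen.lift σ (fun x y hxy => (h x y).mp hxy) _ _ hr
  · intro hr
    have := ReflTransGen.lift σ.symm
      (fun x y (hxy : S x y) => (h (σ.symm x) (σ.symm y)).mpr (by simpa using hxy)) _ _ hr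
    simpa [Function.onFun] using this

lemma reach_mem_of_closed {α : Type*} {R : α → α → Prop} {S : Set α}
    (hcl : ∀ a b, a ∈ S → R a b → b ∈ S) {r y : α} (hr : r ∈ S)
    (h : ReflTransGen R r y) : y ∈ S := by
  induction h with
  | refl => exact hr
  | tail _ hbc ih => exact hcl _ _ ih hbc

lemma reach_subtype_iff {α : Type*} {R : α → α → Prop} {S : Finset α}
    (hcl : ∀ a b, a ∈ S → R a b → b ∈ S) {r y : α} (hr : r ∈ S) (hy : y ∈ S) :
    ReflTransGen R r y ↔
      ReflTransGen (fun a b : S => R a b) (⟨r, hr⟩ : S) (⟨y, hy⟩ : S) := by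
  constructor
  · intro h
    have key : ∀ z (hz : ReflTransGen R r z), ∃ hzS : z ∈ S,
        ReflTransGen (fun a b : S => R a b) (⟨r, hr⟩ : S) ⟨z, hzS⟩ := by
      intro z hz
      induction hz with
      | refl => exact ⟨hr, ReflTransGen.refl⟩
      | tail hab hbc ih =>
        obtain ⟨hbS, hpath⟩ := ih
        exact ⟨hcl _ _ hbS hbc, hpath.tail hbc⟩
    obtain ⟨_, hp⟩ := key y h
    exact hp
  · intro h
    have := ReflTransGen.lift (Subtype.val) (fun a b hab => hab) _ _ h
    exact this

end Reach

section Models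
variable {V W : Type*} [Fintype V] [DecidableEq V] [Fintype W] [DecidableEq W] {p : ℝ}

def arcRel {V : Type*} (ζ : V × V → Bool) (a b : V) : Prop := a ≠ b ∧ ζ (a, b) = true

noncomputable def DPr (p : ℝ) (V : Type*) [Fintype V] [DecidableEq V] (r : V) : ℝ :=
  bernoulliPr p {ζ : V × V → Bool | ∀ y, Relation.ReflTransGen (arcRel ζ) r y}

def gAdj {V : Type*} (η : Sym2 V → Bool) (a b : V) : Prop := a ≠ b ∧ η s(a, b) = true

noncomputable def GPr (p : ℝ) (V : Type*) [Fintype V] [DecidableEq V] (r : V) : ℝ :=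
  bernoulliPr p {η : Sym2 V → Bool | ∀ y, Relation.ReflTransGen (gAdj η) r y}

/-- Sym2 congruence equiv. -/
def sym2Congr {α β : Type*} (σ : α ≃ β) : Sym2 α ≃ Sym2 β where
  toFun := Sym2.map σ
  invFun := Sym2.map σ.symm
  left_inv e := by
    rw [Sym2.map_map]
    have : (σ.symm ∘ σ) = id := by funext a; simp
    rw [this, Sym2.map_id, id]
  right_inv e := by
    rw [Sym2.map_map]
    have : (σ ∘ σ.symm : β → β) = id := by funext a; simp
    rw [this, Sym2.map_id, id]

lemma DPr_reindex (σ : V ≃ W) (r : V) : DPr p V r = DPr p W (σ r) := by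
  unfold DPr
  rw [← bernoulli_reindex (σ.prodCongr σ) {ζ : V × V → Bool | ∀ y, Relation.ReflTransGen (arcRel ζ) r y}]
  congr 1
  ext η
  simp only [Set.mem_setOf_eq]
  have harc : ∀ a b : V, arcRel (fun e => η (σ.prodCongr σ e)) a b ↔ arcRel η (σ a) (σ b) := by
    intro a b
    unfold arcRel
    simp [Equiv.prodCongr]
  constructor
  · intro h z
    have := (rtg_equiv σ harc).mp (h (σ.symm z))
    simpa using this
  · intro h y
    exact (rtg_equiv σ harc).mpr (h (σ y))

lemma GPr_reindex (σ : V ≃ W) (r : V) : GPr p V r = GPr p W (σ r) := by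
  unfold GPr
  rw [← bernoulli_reindex (sym2Congr σ) {η : Sym2 V → Bool | ∀ y, Relation.ReflTransGen (gAdj η) r y}]
  congr 1
  ext η
  simp only [Set.mem_setOf_eq]
  have harc : ∀ a b : V, gAdj (fun e => η (sym2Congr σ e)) a b ↔ gAdj η (σ a) (σ b) := by
    intro a b
    simp [gAdj, sym2Congr, Sym2.map_pair_eq]
  constructor
  · intro h z
    have := (rtg_equiv σ harc).mp (h (σ.symm z))
    simpa using this
  · intro h y
    exact (rtg_equiv σ harc).mpr (h (σ y))

end Models

section Conditioning
variable {V : Type*} [Fintype V] [DecidableEq V] {p : ℝ}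
open Relation

def dInj (S : Finset V) : (↥S × ↥S) ≃ {e : V × V // e.1 ∈ S ∧ e.2 ∈ S} where
  toFun uv := ⟨(uv.1.1, uv.2.1), uv.1.2, uv.2.2⟩
  invFun e := (⟨e.1.1, e.2.1⟩, ⟨e.1.2, e.2.2⟩)
  left_inv uv := rfl
  right_inv e := rfl

def dLeave (S : Finset V) : (↥S × ↥(Sᶜ)) ≃ {e : V × V // e.1 ∈ S ∧ e.2 ∉ S} where
  toFun uv := ⟨(uv.1.1, uv.2.1), uv.1.2, Finset.mem_compl.mp uv.2.2⟩
  invFun e := (⟨e.1.1, e.2.1⟩, ⟨e.1.2, Finset.mem_compl.mpr e.2.2⟩)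
  left_inv uv := rfl
  right_inv e := rfl

lemma card_dLeave (S : Finset V) :
    Fintype.card {e : V × V // e.1 ∈ S ∧ e.2 ∉ S} = S.card * (Fintype.card V - S.card) := by
  rw [← Fintype.card_congr (dLeave S), Fintype.card_prod, Fintype.card_coe, Fintype.card_coe,
    Finset.card_compl]

lemma D_outset_prob (S : Finset V) (r : V) (hr : r ∈ S) :
    bernoulliPr p {ζ : V × V → Bool | {y | Relation.ReflTransGen (arcRel ζ) r y} = ↑S} =
      DPr p ↥S ⟨r, hr⟩ * (1 - p) ^ (S.card * (Fintype.card V - S.card)) := by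
  classical
  rw [← card_dLeave S]
  have key := bernoulli_factor (p := p)
    (fun e : V × V => e.1 ∈ S ∧ e.2 ∈ S) (fun e : V × V => e.1 ∈ S ∧ e.2 ∉ S)
    (fun e h1 h2 => h2.2 h1.2)
    {ζ : V × V → Bool | {y | Relation.ReflTransGen (arcRel ζ) r y} = ↑S}
    {g : {e : V × V // e.1 ∈ S ∧ e.2 ∈ S} → Bool |
      (fun uv : ↥S × ↥S => g (dInj S uv)) ∈
        {ζ : ↥S × ↥S → Bool | ∀ y, Relation.ReflTransGen (arcRel ζ) ⟨r, hr⟩ y}}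
    ?_
  · rw [key]
    congr 1
    exact bernoulli_reindex (dInj S) _
  · intro ζ
    simp only [Set.mem_setOf_eq]
    constructor
    · intro hout
      have hmem : ∀ y, ReflTransGen (arcRel ζ) r y → y ∈ S := by
        intro y hy
        have : y ∈ ({y | ReflTransGen (arcRel ζ) r y} : Set V) := hy
        rw [hout] at this; exact this
      have hcl : ∀ a b, a ∈ S → arcRel ζ a b → b ∈ S := by
        intro a b ha hab
        have hra : ReflTransGen (arcRel ζ) r a := by
          have : a ∈ (↑S : Set V) := ha
          rw [← hout] at this; exact this
        exact hmem b (hra.tail hab)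
      constructor
      · intro y
        have hy : ReflTransGen (arcRel ζ) r y.1 := by
          have : y.1 ∈ (↑S : Set V) := y.2
          rw [← hout] at this; exact this
        have := (reach_subtype_iff hcl hr y.2).mp hy
        refine Relation.ReflTransGen.mono ?_ _ _ this
        rintro a b ⟨hne, hb⟩
        exact ⟨fun hc => hne (by rw [hc]), hb⟩
      · rintro e ⟨h1, h2⟩
        by_contra hc
        have htrue : ζ e = true := by
          cases h : ζ e with
          | false => exact absurd h hc
          | true => rfl
        have hra : ReflTransGen (arcRel ζ) r e.1 := by
          have : e.1 ∈ (↑S : Set V) := h1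
          rw [← hout] at this; exact this
        have harc : arcRel ζ e.1 e.2 := ⟨fun hc' => h2 (hc' ▸ h1), by rw [← htrue]⟩
        exact h2 (hmem e.2 (hra.tail harc))
    · rintro ⟨hreach, hleave⟩
      have hcl : ∀ a b, a ∈ S → arcRel ζ a b → b ∈ S := by
        intro a b ha hab
        by_contra hb
        have := hleave (a, b) ⟨ha, hb⟩
        simp [hab.2] at this
      ext y
      simp only [Set.mem_setOf_eq, Finset.coe_mem, Finset.mem_coe]
      constructor
      · intro hy
        exact reach_mem_of_closed (fun a b (ha : a ∈ (S : Set V)) hab => hcl a b ha hab)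
          (show r ∈ (S : Set V) from hr) hy
      · intro hy
        have := hreach ⟨y, hy⟩
        have h2 : ReflTransGen (fun a b : ↥S => arcRel ζ a.1 b.1) ⟨r, hr⟩ ⟨y, hy⟩ := by
          refine Relation.ReflTransGen.mono ?_ _ _ this
          rintro a b ⟨hne, hb⟩
          exact ⟨fun hc => hne (Subtype.ext hc), hb⟩
        exact (reach_subtype_iff hcl hr hy).mpr h2
end Conditioning

section GCond
variable {V : Type*} [Fintype V] [DecidableEq V] {p : ℝ}
open Relation

noncomputable def gInj (S : Finset V) : Sym2 ↥S ≃ {e : Sym2 V // ∀ a ∈ e, a ∈ S} :=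
  Equiv.ofBijective
    (fun e2 => ⟨Sym2.map Subtype.val e2, by
      induction e2 with
      | _ a b =>
        intro c hc
        rw [Sym2.map_pair_eq] at hc
        rcases Sym2.mem_iff.mp hc with h | h
        · exact h ▸ a.2
        · exact h ▸ b.2⟩)
    (by
      constructor
      · intro e1 e2 h
        exact Sym2.map.injective Subtype.val_injective (congrArg Subtype.val h)
      · rintro ⟨e, he⟩
        induction e with
        | _ a b =>
          exact ⟨s(⟨a, he a (Sym2.mem_mk_left a b)⟩, ⟨b, he b (Sym2.mem_mk_right a b)⟩),
            Subtype.ext (Sym2.map_pair_eq _ _ _)⟩)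

noncomputable def gLeave (S : Finset V) :
    (↥S × ↥(Sᶜ)) ≃ {e : Sym2 V // ∃ a b, a ∈ S ∧ b ∉ S ∧ e = s(a, b)} :=
  Equiv.ofBijective
    (fun uv => ⟨s(uv.1.1, uv.2.1), uv.1.1, uv.2.1, uv.1.2, Finset.mem_compl.mp uv.2.2, rfl⟩)
    (by
      constructor
      · rintro ⟨a, b⟩ ⟨a', b'⟩ h
        have h2 : s(a.1, b.1) = s(a'.1, b'.1) := congrArg Subtype.val h
        rcases Sym2.eq_iff.mp h2 with ⟨h3, h4⟩ | ⟨h3, h4⟩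
        · exact Prod.ext (Subtype.ext h3) (Subtype.ext h4)
        · exact absurd (h3 ▸ a.2) (Finset.mem_compl.mp b'.2)
      · rintro ⟨e, a, b, ha, hb, rfl⟩
        exact ⟨(⟨a, ha⟩, ⟨b, Finset.mem_compl.mpr hb⟩), rfl⟩)

lemma card_gLeave (S : Finset V) :
    Fintype.card {e : Sym2 V // ∃ a b, a ∈ S ∧ b ∉ S ∧ e = s(a, b)} =
      S.card * (Fintype.card V - S.card) := by
  rw [← Fintype.card_congr (gLeave S), Fintype.card_prod, Fintype.card_coe, Fintype.card_coe,
    Finset.card_compl]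

lemma G_comp_prob (S : Finset V) (r : V) (hr : r ∈ S) :
    bernoulliPr p {η : Sym2 V → Bool | {y | Relation.ReflTransGen (gAdj η) r y} = ↑S} =
      GPr p ↥S ⟨r, hr⟩ * (1 - p) ^ (S.card * (Fintype.card V - S.card)) := by
  classical
  rw [← card_gLeave S]
  have key := bernoulli_factor (p := p)
    (fun e : Sym2 V => ∀ a ∈ e, a ∈ S) (fun e : Sym2 V => ∃ a b, a ∈ S ∧ b ∉ S ∧ e = s(a, b))
    ?_
    {η : Sym2 V → Bool | {y | Relation.ReflTransGen (gAdj η) r y} = ↑S}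
    {g : {e : Sym2 V // ∀ a ∈ e, a ∈ S} → Bool |
      (fun e2 : Sym2 ↥S => g (gInj S e2)) ∈
        {η : Sym2 ↥S → Bool | ∀ y, Relation.ReflTransGen (gAdj η) ⟨r, hr⟩ y}}
    ?_
  · rw [key]
    congr 1
    exact bernoulli_reindex (gInj S) _
  · rintro e hP ⟨a, b, ha, hb, rfl⟩
    exact hb (hP b (Sym2.mem_mk_right a b))
  · intro η
    simp only [Set.mem_setOf_eq]
    have hsub : ∀ (a b : ↥S), gAdj (fun e2 => η ((gInj S e2).1)) a b ↔ gAdj η a.1 b.1 := by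
      intro a b
      unfold gAdj
      have h1 : ((gInj S) s(a, b)).1 = s(a.1, b.1) := Sym2.map_pair_eq _ _ _
      constructor
      · rintro ⟨hne, hb'⟩
        refine ⟨fun hc => hne (Subtype.ext hc), ?_⟩
        have hb'' : η ((gInj S) s(a, b)).1 = true := hb'
        rw [h1] at hb''
        exact hb''
      · rintro ⟨hne, hb'⟩
        refine ⟨fun hc => hne (congrArg Subtype.val hc), ?_⟩
        show η ((gInj S) s(a, b)).1 = true
        rw [h1]
        exact hb'
    constructor
    · intro hout
      have hmem : ∀ y, ReflTransGen (gAdj η) r y → y ∈ S := by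
        intro y hy
        have : y ∈ ({y | ReflTransGen (gAdj η) r y} : Set V) := hy
        rw [hout] at this; exact this
      have hra : ∀ a, a ∈ S → ReflTransGen (gAdj η) r a := by
        intro a ha
        have : a ∈ (↑S : Set V) := ha
        rw [← hout] at this; exact this
      have hcl : ∀ a b, a ∈ S → gAdj η a b → b ∈ S := by
        intro a b ha hab
        exact hmem b ((hra a ha).tail hab)
      constructor
      · intro y
        have := (reach_subtype_iff hcl hr y.2).mp (hra y.1 y.2)
        refine Relation.ReflTransGen.mono ?_ _ _ this
        rintro a b hab
        exact (hsub a b).mpr hab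
      · rintro e ⟨a, b, ha, hb, rfl⟩
        by_contra hc
        have htrue : η s(a, b) = true := by
          cases h : η s(a, b) with
          | false => exact absurd h hc
          | true => rfl
        have harc : gAdj η a b := ⟨fun hc' => hb (hc' ▸ ha), htrue⟩
        exact hb (hmem b ((hra a ha).tail harc))
    · rintro ⟨hreach, hleave⟩
      have hcl : ∀ a b, a ∈ S → gAdj η a b → b ∈ S := by
        intro a b ha hab
        by_contra hb
        have := hleave s(a, b) ⟨a, b, ha, hb, rfl⟩
        simp [hab.2] at this
      ext y
      simp only [Set.mem_setOf_eq, Finset.mem_coe]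
      constructor
      · intro hy
        exact reach_mem_of_closed (fun a b ha hab => hcl a b ha hab) hr hy
      · intro hy
        have := hreach ⟨y, hy⟩
        have h2 : ReflTransGen (fun a b : ↥S => gAdj η a.1 b.1) ⟨r, hr⟩ ⟨y, hy⟩ :=
          Relation.ReflTransGen.mono (fun a b hab => (hsub a b).mp hab) _ _ this
        exact (reach_subtype_iff hcl hr hy).mpr h2
end GCond

section Partition
variable {V : Type*} [Fintype V] [DecidableEq V] {p : ℝ}
open Relation

lemma D_partition (r : V) :
    ∑ S ∈ (Finset.univ : Finset (Finset V)).filter (fun S => r ∈ S),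
      bernoulliPr p {ζ : V × V → Bool | {y | ReflTransGen (arcRel ζ) r y} = ↑S} = 1 := by
  classical
  refine bernoulli_partition _ _ fun ζ => ?_
  refine ⟨Finset.univ.filter (fun y => ReflTransGen (arcRel ζ) r y), ⟨?_, ?_⟩, ?_⟩
  · simp only [Finset.mem_filter, Finset.mem_univ, true_and]
    exact ReflTransGen.refl
  · ext y; simp
  · rintro S' ⟨hS', hA⟩
    apply Finset.coe_injective
    rw [← hA]
    ext y; simp

lemma G_partition (r : V) :
    ∑ S ∈ (Finset.univ : Finset (Finset V)).filter (fun S => r ∈ S),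
      bernoulliPr p {η : Sym2 V → Bool | {y | ReflTransGen (gAdj η) r y} = ↑S} = 1 := by
  classical
  refine bernoulli_partition _ _ fun η => ?_
  refine ⟨Finset.univ.filter (fun y => ReflTransGen (gAdj η) r y), ⟨?_, ?_⟩, ?_⟩
  · simp only [Finset.mem_filter, Finset.mem_univ, true_and]
    exact ReflTransGen.refl
  · ext y; simp
  · rintro S' ⟨hS', hA⟩
    apply Finset.coe_injective
    rw [← hA]
    ext y; simp

lemma DPr_subtype_univ (r : V) :
    DPr p (↥(Finset.univ : Finset V)) ⟨r, Finset.mem_univ r⟩ = DPr p V r :=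
  DPr_reindex (Equiv.subtypeUnivEquiv (fun x => Finset.mem_univ x)) _

lemma GPr_subtype_univ (r : V) :
    GPr p (↥(Finset.univ : Finset V)) ⟨r, Finset.mem_univ r⟩ = GPr p V r :=
  GPr_reindex (Equiv.subtypeUnivEquiv (fun x => Finset.mem_univ x)) _

end Partition

universe u

lemma DPr_eq_GPr {p : ℝ} : ∀ (m : ℕ), ∀ (V : Type u) [Fintype V] [DecidableEq V], ∀ (r : V),
    Fintype.card V = m → DPr p V r = GPr p V r := by
  intro m
  induction m using Nat.strong_induction_on with
  | _ m ih =>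
    intro V _ _ r hcard
    classical
    set f : Finset V → ℝ := fun S =>
      if h : r ∈ S then DPr p ↥S ⟨r, h⟩ * (1 - p) ^ (S.card * (Fintype.card V - S.card)) else 0
      with hf
    set g : Finset V → ℝ := fun S =>
      if h : r ∈ S then GPr p ↥S ⟨r, h⟩ * (1 - p) ^ (S.card * (Fintype.card V - S.card)) else 0
      with hg
    have hD : ∑ S ∈ (Finset.univ : Finset (Finset V)).filter (fun S => r ∈ S), f S = 1 := by
      rw [← D_partition (p := p) r]
      refine Finset.sum_congr rfl fun S hS => ?_
      have hrS : r ∈ S := (Finset.mem_filter.mp hS).2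
      rw [hf]
      simp only [hrS, dif_pos]
      exact (D_outset_prob S r hrS).symm
    have hG : ∑ S ∈ (Finset.univ : Finset (Finset V)).filter (fun S => r ∈ S), g S = 1 := by
      rw [← G_partition (p := p) r]
      refine Finset.sum_congr rfl fun S hS => ?_
      have hrS : r ∈ S := (Finset.mem_filter.mp hS).2
      rw [hg]
      simp only [hrS, dif_pos]
      exact (G_comp_prob S r hrS).symm
    -- split off the univ term
    have huniv_mem : (Finset.univ : Finset V) ∈
        (Finset.univ : Finset (Finset V)).filter (fun S => r ∈ S) := by simp
    have hfu : f Finset.univ = DPr p V r := by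
      rw [hf]
      simp only [Finset.mem_univ, dif_pos]
      rw [Finset.card_univ, Nat.sub_self, mul_zero, pow_zero, mul_one]
      exact DPr_subtype_univ r
    have hgu : g Finset.univ = GPr p V r := by
      rw [hg]
      simp only [Finset.mem_univ, dif_pos]
      rw [Finset.card_univ, Nat.sub_self, mul_zero, pow_zero, mul_one]
      exact GPr_subtype_univ r
    have hrest : ∀ S ∈ ((Finset.univ : Finset (Finset V)).filter (fun S => r ∈ S)).erase
        Finset.univ, f S = g S := by
      intro S hS
      have hne : S ≠ Finset.univ := (Finset.mem_erase.mp hS).1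
      have hrS : r ∈ S := (Finset.mem_filter.mp (Finset.mem_erase.mp hS).2).2
      have hlt : S.card < m := by
        rw [← hcard, ← Finset.card_univ]
        exact Finset.card_lt_card (Finset.ssubset_univ_iff.mpr hne)
      rw [hf, hg]
      simp only [hrS, dif_pos]
      congr 1
      exact ih S.card hlt ↥S ⟨r, hrS⟩ (Fintype.card_coe S)
    have h1 := Finset.add_sum_erase _ f huniv_mem
    have h2 := Finset.add_sum_erase _ g huniv_mem
    have hsum_eq : ∑ S ∈ ((Finset.univ : Finset (Finset V)).filter (fun S => r ∈ S)).erase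
        Finset.univ, f S = ∑ S ∈ _, g S := Finset.sum_congr rfl hrest
    rw [← hfu, ← hgu]
    have := hD.trans hG.symm
    rw [← h1, ← h2, hsum_eq] at this
    linarith

section Link
variable {p : ℝ}
open Relation

lemma GPr_eq_connPr (k : ℕ) (r : Fin k) : GPr p (Fin k) r = connPr k p := by
  unfold GPr connPr
  congr 1
  ext η
  simp only [Set.mem_setOf_eq]
  have hadj : ∀ a b : Fin k, (graphOf η).Adj a b ↔ gAdj η a b := by
    intro a b
    rw [graphOf, SimpleGraph.fromRel_adj]
    unfold gAdj
    constructor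
    · rintro ⟨hne, h | h⟩
      · exact ⟨hne, h⟩
      · exact ⟨hne, by rw [Sym2.eq_swap]; exact h⟩
    · rintro ⟨hne, h⟩; exact ⟨hne, Or.inl h⟩
  constructor
  · intro h
    rw [SimpleGraph.connected_iff]
    refine ⟨fun a b => ?_, ⟨r⟩⟩
    have ha : (graphOf η).Reachable r a := (SimpleGraph.reachable_iff_reflTransGen _ _).mpr
      (Relation.ReflTransGen.mono (fun c d hcd => (hadj c d).mpr hcd) _ _ (h a))
    have hb : (graphOf η).Reachable r b := (SimpleGraph.reachable_iff_reflTransGen _ _).mpr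
      (Relation.ReflTransGen.mono (fun c d hcd => (hadj c d).mpr hcd) _ _ (h b))
    exact ha.symm.trans hb
  · intro h y
    have := (SimpleGraph.reachable_iff_reflTransGen _ _).mp (h.preconnected r y)
    exact Relation.ReflTransGen.mono (fun a b hab => (hadj a b).mp hab) _ _ this

lemma DPr_eq_connPr (V : Type) [Fintype V] [DecidableEq V] (r : V) (k : ℕ)
    (h : Fintype.card V = k) : DPr p V r = connPr k p := by
  rw [DPr_eq_GPr (Fintype.card V) V r rfl]
  rw [GPr_reindex (Fintype.equivFinOfCardEq h) r]
  exact GPr_eq_connPr k _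

lemma DPr_offdiag (V : Type*) [Fintype V] [DecidableEq V] (r : V) :
    DPr p V r = bernoulliPr p {ζ : {uv : V × V // uv.1 ≠ uv.2} → Bool |
      ∀ y, ReflTransGen (fun a b => ∃ h : a ≠ b, ζ ⟨(a, b), h⟩ = true) r y} := by
  classical
  unfold DPr
  refine bernoulli_marginal (fun uv : V × V => uv.1 ≠ uv.2) _ _ fun ζ => ?_
  simp only [Set.mem_setOf_eq]
  have harc : ∀ a b : V, arcRel ζ a b ↔ (∃ h : a ≠ b, ζ ((a, b)) = true) := by
    intro a b
    exact ⟨fun ⟨h1, h2⟩ => ⟨h1, h2⟩, fun ⟨h1, h2⟩ => ⟨h1, h2⟩⟩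
  constructor
  · intro h y
    exact Relation.ReflTransGen.mono (fun a b hab => (harc a b).mp hab) _ _ (h y)
  · intro h y
    exact Relation.ReflTransGen.mono (fun a b hab => (harc a b).mpr hab) _ _ (h y)
end Link

section TwoSat
variable {n : ℕ}

def Pmain (X : Finset (Lit n)) (e : Sym2 (Lit n)) : Prop :=
  ∃ u v : Lit n, u ∈ X ∧ v ∈ X ∧ u ≠ v ∧ e = s(negLit u, v)

def Qmain (X : Finset (Lit n)) (e : Sym2 (Lit n)) : Prop :=
  ∃ u v : Lit n, u ∈ X ∧ v ∉ X ∧ u.1 ≠ v.1 ∧ e = s(negLit u, v)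

lemma negLit_invol (y : Lit n) : negLit (negLit y) = y := by
  cases y with | mk a b => simp [negLit]

lemma negLit_inj : Function.Injective (negLit (n := n)) :=
  Function.LeftInverse.injective negLit_invol

lemma negLit_notmem {X : Finset (Lit n)} (hsd : SDset (↑X : Set (Lit n))) {u : Lit n}
    (hu : u ∈ X) : negLit u ∉ X := fun h => hsd u hu h

lemma fst_ne {X : Finset (Lit n)} (hsd : SDset (↑X : Set (Lit n))) {u v : Lit n}
    (hu : u ∈ X) (hv : v ∈ X) (hne : u ≠ v) : u.1 ≠ v.1 := by
  intro h
  have h2 : u.2 ≠ v.2 := fun hb => hne (Prod.ext h hb)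
  have h3 : v.2 = !u.2 := by
    cases hu2 : u.2 <;> cases hv2 : v.2 <;> simp_all
  have : v = negLit u := Prod.ext h.symm h3
  exact negLit_notmem hsd hu (this ▸ hv)

noncomputable def psiMain (X : Finset (Lit n)) (hsd : SDset (↑X : Set (Lit n))) :
    {uv : ↥X × ↥X // uv.1 ≠ uv.2} ≃ {e : Sym2 (Lit n) // Pmain X e} :=
  Equiv.ofBijective
    (fun uv => ⟨s(negLit uv.1.1.1, uv.1.2.1),
      uv.1.1.1, uv.1.2.1, uv.1.1.2, uv.1.2.2, fun h => uv.2 (Subtype.ext h), rfl⟩)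
    (by
      constructor
      · rintro ⟨⟨a, b⟩, hab⟩ ⟨⟨a', b'⟩, hab'⟩ heq
        have h2 : s(negLit a.1, b.1) = s(negLit a'.1, b'.1) := congrArg Subtype.val heq
        rcases Sym2.eq_iff.mp h2 with ⟨h3, h4⟩ | ⟨h3, h4⟩
        · exact Subtype.ext (Prod.ext (Subtype.ext (negLit_inj h3)) (Subtype.ext h4))
        · exact absurd (h3 ▸ b'.2) (negLit_notmem hsd a.2)
      · rintro ⟨e, u, v, hu, hv, hne, rfl⟩
        exact ⟨⟨(⟨u, hu⟩, ⟨v, hv⟩), fun h => hne (congrArg Subtype.val h)⟩, rfl⟩)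

lemma two_mul_card_Qmain (X : Finset (Lit n)) (hsd : SDset (↑X : Set (Lit n)))
    (hkn : X.card ≤ n) [DecidablePred (Qmain X)] :
    4 * (X.card : ℤ) * n - 3 * (X.card : ℤ) ^ 2 - X.card
      = 2 * (Fintype.card {e : Sym2 (Lit n) // Qmain X e} : ℤ) := by
  classical
  set k := X.card with hk
  set Y : Finset (Lit n) := X ∪ X.image negLit with hY
  set φ : Lit n × Lit n → Sym2 (Lit n) := fun uv => s(negLit uv.1, uv.2) with hφ
  set ψ : Lit n × Lit n → Sym2 (Lit n) := fun uv => s(negLit uv.1, negLit uv.2) with hψ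
  set F1 := (X ×ˢ Yᶜ).image φ with hF1def
  set F2 := X.offDiag.image ψ with hF2def
  have hYmem : ∀ {u : Lit n}, u ∈ X → negLit u ∈ Y := fun {u} hu => by
    rw [hY]; exact Finset.mem_union_right _ (Finset.mem_image.mpr ⟨u, hu, rfl⟩)
  have hcards : Fintype.card {e : Sym2 (Lit n) // Qmain X e}
      = (Finset.univ.filter (Qmain X)).card := Fintype.card_subtype _
  have hsplit : Finset.univ.filter (Qmain X) = F1 ∪ F2 := by
    ext e
    simp only [Finset.mem_filter, Finset.mem_univ, true_and, Finset.mem_union]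
    constructor
    · rintro ⟨u, v, hu, hv, hne, rfl⟩
      by_cases hvY : v ∈ X.image negLit
      · right
        obtain ⟨w, hw, rfl⟩ := Finset.mem_image.mp hvY
        refine Finset.mem_image.mpr ⟨(u, w), Finset.mem_offDiag.mpr ⟨hu, hw, ?_⟩, rfl⟩
        exact fun h => hne (show u.1 = w.1 from congrArg Prod.fst h)
      · left
        refine Finset.mem_image.mpr ⟨(u, v), Finset.mem_product.mpr ⟨hu, ?_⟩, rfl⟩
        rw [Finset.mem_compl, hY, Finset.mem_union]
        push_neg
        exact ⟨hv, hvY⟩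
    · rintro (h | h)
      · obtain ⟨⟨u, v⟩, huv, rfl⟩ := Finset.mem_image.mp h
        obtain ⟨hu, hv⟩ := Finset.mem_product.mp huv
        rw [Finset.mem_compl, hY, Finset.mem_union] at hv
        push_neg at hv
        refine ⟨u, v, hu, hv.1, ?_, rfl⟩
        intro hfst
        by_cases hb : v.2 = u.2
        · exact hv.1 ((Prod.ext hfst.symm hb : v = u) ▸ hu)
        · have h3 : v.2 = !u.2 := by
            cases hu2 : u.2 <;> cases hv2 : v.2 <;> simp_all
          exact hv.2 (Finset.mem_image.mpr ⟨u, hu, Prod.ext hfst h3.symm⟩)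
      · obtain ⟨⟨u, w⟩, huw, rfl⟩ := Finset.mem_image.mp h
        obtain ⟨hu, hw, hne⟩ := Finset.mem_offDiag.mp huw
        exact ⟨u, negLit w, hu, negLit_notmem hsd hw, fun h => fst_ne hsd hu hw hne h, rfl⟩
  have hdisj : Disjoint F1 F2 := by
    rw [Finset.disjoint_left]
    rintro e h1 h2
    obtain ⟨⟨u, v⟩, huv, rfl⟩ := Finset.mem_image.mp h1
    obtain ⟨⟨u', w'⟩, hu'w', heq⟩ := Finset.mem_image.mp h2
    obtain ⟨hu, hv⟩ := Finset.mem_product.mp huv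
    obtain ⟨hu', hw', _⟩ := Finset.mem_offDiag.mp hu'w'
    rw [Finset.mem_compl] at hv
    rcases Sym2.eq_iff.mp heq with ⟨h3, h4⟩ | ⟨h3, h4⟩
    · exact hv (h4 ▸ hYmem hw')
    · exact hv (h3 ▸ hYmem hu')
  have hdisjY : Disjoint X (X.image negLit) := by
    rw [Finset.disjoint_left]
    rintro a ha hmem
    obtain ⟨b, hb, rfl⟩ := Finset.mem_image.mp hmem
    exact negLit_notmem hsd hb ha
  have hYcard : Y.card = 2 * k := by
    rw [hY, Finset.card_union_of_disjoint hdisjY, Finset.card_image_of_injective _ negLit_inj]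
    omega
  have hLit : Fintype.card (Lit n) = 2 * n := by
    simp [mul_comm]
  have hYc : (Yᶜ).card = 2 * n - 2 * k := by
    rw [Finset.card_compl, hYcard, hLit]
  have hF1 : F1.card = k * (2 * n - 2 * k) := by
    rw [hF1def, Finset.card_image_of_injOn, Finset.card_product, hYc]
    rintro ⟨u, v⟩ huv ⟨u', v'⟩ hu'v' heq
    obtain ⟨hu, hv⟩ := Finset.mem_product.mp huv
    obtain ⟨hu', hv'⟩ := Finset.mem_product.mp hu'v'
    rw [Finset.mem_compl] at hv hv'
    rcases Sym2.eq_iff.mp heq with ⟨h3, h4⟩ | ⟨h3, h4⟩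
    · exact Prod.ext (negLit_inj h3) h4
    · exact absurd (h3 ▸ hYmem hu) hv'
  have hfib : ∀ b ∈ X.offDiag.image ψ, (X.offDiag.filter (fun a => ψ a = b)).card = 2 := by
    intro b hb
    obtain ⟨⟨u, w⟩, huw, rfl⟩ := Finset.mem_image.mp hb
    obtain ⟨hu, hw, hne⟩ := Finset.mem_offDiag.mp huw
    have hfil : X.offDiag.filter (fun a => ψ a = ψ (u, w)) = {(u, w), (w, u)} := by
      ext ⟨u', w'⟩
      simp only [Finset.mem_filter, Finset.mem_insert, Finset.mem_singleton]
      constructor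
      · rintro ⟨hmem', heq'⟩
        rcases Sym2.eq_iff.mp heq' with ⟨h3, h4⟩ | ⟨h3, h4⟩
        · left; exact Prod.ext (negLit_inj h3) (negLit_inj h4)
        · right; exact Prod.ext (negLit_inj h3) (negLit_inj h4)
      · rintro (heq' | heq')
        · rw [heq']; exact ⟨huw, rfl⟩
        · rw [heq']
          refine ⟨Finset.mem_offDiag.mpr ⟨hw, hu, fun h => hne h.symm⟩, ?_⟩
          rw [hψ]
          exact Sym2.eq_swap
    rw [hfil, Finset.card_insert_of_notMem, Finset.card_singleton]
    rw [Finset.mem_singleton]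
    exact fun hc => hne (congrArg Prod.fst hc)
  have hF2 : 2 * F2.card = k * k - k := by
    have hoff : X.offDiag.card = k * k - k := by
      rw [Finset.offDiag_card]
    rw [← hoff, Finset.card_eq_sum_card_image ψ X.offDiag,
      Finset.sum_congr rfl hfib, Finset.sum_const, smul_eq_mul, mul_comm]
  have hcard2 : Fintype.card {e : Sym2 (Lit n) // Qmain X e} = F1.card + F2.card := by
    rw [hcards, hsplit, Finset.card_union_of_disjoint hdisj]
  have hkk : k ≤ k * k := by nlinarith
  have e1 : (F1.card : ℤ) = (k : ℤ) * (2 * (n : ℤ) - 2 * k) := by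
    rw [hF1]
    push_cast [Nat.cast_sub (show 2 * k ≤ 2 * n by omega)]
    ring
  have e2 : 2 * (F2.card : ℤ) = (k : ℤ) * k - k := by
    have h := congrArg (fun m : ℕ => (m : ℤ)) hF2
    push_cast [Nat.cast_sub hkk] at h
    linarith
  have hsq : (k : ℤ) ^ 2 = (k : ℤ) * k := by ring
  rw [hcard2]
  push_cast
  linarith [e1, e2, hsq]

end TwoSat

/-- For a fixed strictly distinct set `X` of `k` literals with
`x ∈ X`, `Pr(L⁺(x) = X) = Pr(G_{k,p} connected)·(1−p)^{2kn−3k²/2−k/2}`. -/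
theorem outSet_eq_fixed_set_prob (n k : ℕ) (p : ℝ) (hp0 : 0 < p) (hp1 : p < 1)
    (x : Lit n) (X : Finset (Lit n)) (hxX : x ∈ X)
    (hsd : SDset (↑X : Set (Lit n))) (hcard : X.card = k) (hkn : k ≤ n) :
    bernoulliPr p {ω : Sym2 (Lit n) → Bool | outSet ω x = ↑X} =
      connPr k p *
        (1 - p) ^ ((4 * (k : ℤ) * (n : ℤ) - 3 * (k : ℤ) ^ 2 - (k : ℤ)) / 2) := by
  classical
  subst hcard
  set r : ↥X := ⟨x, hxX⟩ with hrdef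
  set OffE : Set ({uv : ↥X × ↥X // uv.1 ≠ uv.2} → Bool) :=
    {ζ | ∀ y, Relation.ReflTransGen (fun a b => ∃ h : a ≠ b, ζ ⟨(a, b), h⟩ = true) r y}
    with hOffE
  have hdisjPQ : ∀ e, Pmain X e → Qmain X e → False := by
    rintro e ⟨u, v, hu, hv, hne, rfl⟩ ⟨u', v', hu', hv', hne', heq⟩
    rcases Sym2.eq_iff.mp heq.symm with ⟨h3, h4⟩ | ⟨h3, h4⟩
    · exact hv' (h4 ▸ hv)
    · exact negLit_notmem hsd hu' (h3 ▸ hv)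
  have hRsub : ∀ (ω : Sym2 (Lit n) → Bool) (a b : ↥X),
      (∃ h : a ≠ b, ω ((psiMain X hsd ⟨(a, b), h⟩).1) = true) ↔ fEdge ω a.1 b.1 := by
    intro ω a b
    constructor
    · rintro ⟨h, hb⟩
      exact ⟨fst_ne hsd a.2 b.2 (fun hc => h (Subtype.ext hc)), hb⟩
    · rintro ⟨h1, h2⟩
      exact ⟨fun hc => h1 (by rw [hc]), h2⟩
  have hEvent : ∀ ω : Sym2 (Lit n) → Bool,
      ω ∈ {ω : Sym2 (Lit n) → Bool | outSet ω x = ↑X} ↔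
      ((fun e : {e // Pmain X e} => ω e.1) ∈
        {g : {e // Pmain X e} → Bool | (fun uv => g (psiMain X hsd uv)) ∈ OffE} ∧
        ∀ e, Qmain X e → ω e = false) := by
    intro ω
    simp only [Set.mem_setOf_eq]
    have hmemF : ((fun uv => (fun e : {e // Pmain X e} => ω e.1) (psiMain X hsd uv)) ∈ OffE) ↔
        (∀ y : ↥X, Relation.ReflTransGen (fun a b : ↥X => fEdge ω a.1 b.1) r y) := by
      rw [hOffE]
      simp only [Set.mem_setOf_eq]
      constructor
      · intro h y
        exact Relation.ReflTransGen.mono (fun a b hab => (hRsub ω a b).mp hab) _ _ (h y)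
      · intro h y
        exact Relation.ReflTransGen.mono (fun a b hab => (hRsub ω a b).mpr hab) _ _ (h y)
    rw [hmemF]
    constructor
    · intro hout
      have hmem : ∀ y, freach ω x y → y ∈ X := fun y hy => by
        have h2 : y ∈ outSet ω x := hy
        rw [hout] at h2; exact h2
      have hxr : ∀ y, y ∈ X → freach ω x y := fun y hy => by
        have h2 : y ∈ (↑X : Set (Lit n)) := hy
        rw [← hout] at h2; exact h2
      have hcl : ∀ a b, a ∈ X → fEdge ω a b → b ∈ X :=
        fun a b ha hab => hmem b ((hxr a ha).tail hab)
      constructor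
      · intro y
        exact (reach_subtype_iff hcl hxX y.2).mp (hxr y.1 y.2)
      · rintro e ⟨u, v, hu, hv, hne, rfl⟩
        cases hωe : ω s(negLit u, v) with
        | false => rfl
        | true => exact absurd (hmem v ((hxr u hu).tail ⟨hne, hωe⟩)) hv
    · rintro ⟨hreach, hQ⟩
      have hcl : ∀ a b, a ∈ X → fEdge ω a b → b ∈ X := by
        intro a b ha hab
        by_contra hb
        have h2 := hQ s(negLit a, b) ⟨a, b, ha, hb, hab.1, rfl⟩
        rw [hab.2] at h2
        exact Bool.noConfusion h2
      apply Set.ext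
      intro y
      constructor
      · intro hy
        exact reach_mem_of_closed hcl hxX hy
      · intro hy
        have hyX : y ∈ X := hy
        exact (reach_subtype_iff hcl hxX hyX).mpr (hreach ⟨y, hyX⟩)
  have hfac := bernoulli_factor (p := p) (Pmain X) (Qmain X) hdisjPQ
    {ω : Sym2 (Lit n) → Bool | outSet ω x = ↑X}
    {g : {e // Pmain X e} → Bool | (fun uv => g (psiMain X hsd uv)) ∈ OffE}
    hEvent
  rw [hfac]
  have h1 : bernoulliPr p
      {g : {e // Pmain X e} → Bool | (fun uv => g (psiMain X hsd uv)) ∈ OffE} =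
      bernoulliPr p OffE := bernoulli_reindex (psiMain X hsd) OffE
  have h2 : bernoulliPr p OffE = DPr p ↥X r := (DPr_offdiag ↥X r).symm
  have h3 : DPr p ↥X r = connPr X.card p := DPr_eq_connPr ↥X r X.card (Fintype.card_coe X)
  rw [h1, h2, h3]
  congr 1
  have hz := two_mul_card_Qmain X hsd hkn
  rw [hz, Int.mul_ediv_cancel_left _ two_ne_zero, zpow_natCast]
end
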